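/- arXiv:1309.4028 — 4 statements merged into one kernel-verified Lean document; each statement's English description precedes it below -/
import Mathlib

section
/- Let α₁, …, αₙ be real numbers which are linearly independent over ℚ, let H₀ = Σ_{i=1}^n (αᵢ + tᵢ) pᵢqᵢ ∈ ℂ[[t,λ,q,p]], and let I ⊂ ℂ[[t,λ,q,p]] be the ideal generated by p₁q₁ − λ₁, …, pₙqₙ − λₙ. Then for every R ∈ ℂ[[t,λ,q,p]] there exist F ∈ ℂ[[t,λ,q,p]], elements a₁, …, aₙ ∈ ℂ[[t,λ]], an element S ∈ I², and an element c ∈ ℂ[[t,λ]] such that {F, H₀} + Σ_{i=1}^n aᵢ·pᵢqᵢ = R + S + c. -/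
/-!
Formalization of: rigidity of the formal normal form (Proposition on formal power series).

We work in the ring `ℂ[[t,λ,q,p]]` of formal power series in `4n` variables, realized as
`MvPowerSeries (Var n) ℂ` where `Var n = Fin n ⊕ Fin n ⊕ Fin n ⊕ Fin n` (blocks `t, λ, q, p`).
-/

open MvPowerSeries

/-- The index type for the `4n` variables `t₁,…,tₙ, λ₁,…,λₙ, q₁,…,qₙ, p₁,…,pₙ`. -/
abbrev Var (n : ℕ) : Type := Fin n ⊕ (Fin n ⊕ (Fin n ⊕ Fin n))

/-- The variable `tᵢ`. -/
def tv {n : ℕ} (i : Fin n) : Var n := Sum.inl i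
/-- The variable `λᵢ`. -/
def lv {n : ℕ} (i : Fin n) : Var n := Sum.inr (Sum.inl i)
/-- The variable `qᵢ`. -/
def qv {n : ℕ} (i : Fin n) : Var n := Sum.inr (Sum.inr (Sum.inl i))
/-- The variable `pᵢ`. -/
def pv {n : ℕ} (i : Fin n) : Var n := Sum.inr (Sum.inr (Sum.inr i))

/-- Formal partial derivative of a multivariate power series with respect to the
variable `k` : the coefficient of `x^d` in `∂f/∂x_k` is `(d k + 1)·(coefficient of
`x^(d + e_k)` in `f`). -/
noncomputable def pderiv {σ : Type} [DecidableEq σ] (k : σ) (f : MvPowerSeries σ ℂ) :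
    MvPowerSeries σ ℂ :=
  fun d => ((d k : ℂ) + 1) * MvPowerSeries.coeff (R := ℂ) (d + Finsupp.single k 1) f

/-- The Poisson bracket `{f,g} = Σᵢ (∂f/∂qᵢ ∂g/∂pᵢ − ∂g/∂qᵢ ∂f/∂pᵢ)`; the variables
`t` and `λ` are central. -/
noncomputable def poisson {n : ℕ} (f g : MvPowerSeries (Var n) ℂ) :
    MvPowerSeries (Var n) ℂ :=
  ∑ i : Fin n, (pderiv (qv i) f * pderiv (pv i) g - pderiv (qv i) g * pderiv (pv i) f)

/-- The weight of a variable: `deg tᵢ = 0`, `deg λᵢ = 2`, `deg qᵢ = deg pᵢ = 1`. -/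
def wt {n : ℕ} : Var n → ℕ
  | Sum.inl _ => 0
  | Sum.inr (Sum.inl _) => 2
  | Sum.inr (Sum.inr _) => 1

/-- The weighted degree of a monomial (exponent vector) `d`. -/
def wdeg {n : ℕ} (d : Var n →₀ ℕ) : ℕ := d.sum fun v m => m * wt v

/-- `H₀ = Σᵢ (αᵢ + tᵢ) pᵢ qᵢ`. -/
noncomputable def H0 {n : ℕ} (α : Fin n → ℝ) : MvPowerSeries (Var n) ℂ :=
  ∑ i : Fin n, (MvPowerSeries.C (σ := Var n) (R := ℂ) (α i : ℂ) + X (tv i)) * (X (pv i) * X (qv i))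

/-- A series lies in the subring `ℂ[[t,λ]]` iff every monomial containing a variable
`qᵢ` or `pᵢ` has zero coefficient. -/
def noQP {n : ℕ} (f : MvPowerSeries (Var n) ℂ) : Prop :=
  ∀ d : Var n →₀ ℕ, (∃ i : Fin n, d (qv i) ≠ 0 ∨ d (pv i) ≠ 0) →
    MvPowerSeries.coeff (R := ℂ) d f = 0

/-- The ideal `I` generated by `p₁q₁ − λ₁, …, pₙqₙ − λₙ`. -/
noncomputable def idealI (n : ℕ) : Ideal (MvPowerSeries (Var n) ℂ) :=
  Ideal.span (Set.range fun i : Fin n => X (pv i) * X (qv i) - X (lv i))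


/-!
Since `tᵢ` and `λᵢ` are central, `{F, H₀} = ∑ᵢ (αᵢ + tᵢ) (qᵢ ∂_{qᵢ} F - pᵢ ∂_{pᵢ} F)`. On the
monomial with exponent `d` the operator `qᵢ ∂_{qᵢ} - pᵢ ∂_{pᵢ}` is multiplication by
`d_{qᵢ} - d_{pᵢ}`, so the coefficient of `{F, H₀}` at `d` is the small divisor
`∑ᵢ (d_{qᵢ} - d_{pᵢ}) αᵢ` times that of `F`, plus coefficients of `F` of lower degree coming from
the `tᵢ`. Off the diagonal `d_q = d_p` the small divisor is nonzero by `ℚ`-linear independence,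
so `F` can be chosen degree by degree with `R - {F, H₀}` diagonal, i.e. a series in `t`, `λ` and
`wᵢ = pᵢqᵢ`.

A diagonal series is divided by `uᵢ = wᵢ - λᵢ` by substituting `wᵢ = λᵢ`; doing this for
`i = 1, …, n` writes it as `∑ᵢ gᵢ uᵢ + c` with `gᵢ` diagonal and `c ∈ ℂ[[t,λ]]`. Dividing each
`gᵢ` once more gives `gᵢ ≡ aᵢ mod I` with `aᵢ ∈ ℂ[[t,λ]]`, hence modulo `I²` the diagonal part is
`∑ᵢ aᵢ uᵢ + c = ∑ᵢ aᵢ wᵢ + (c - ∑ᵢ aᵢ λᵢ)`.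
-/

namespace MvPowerSeries

section SupportedOn

variable {σ R : Type*} [CommSemiring R]

def supportedOn (M : AddSubmonoid (σ →₀ ℕ)) : Subalgebra R (MvPowerSeries σ R) where
  carrier := {f | ∀ d ∉ M, coeff d f = 0}
  mul_mem' {f g} hf hg d hd := by
    classical
    rw [coeff_mul]
    refine Finset.sum_eq_zero fun p hp => ?_
    have hp : p.1 + p.2 = d := Finset.HasAntidiagonal.mem_antidiagonal.mp hp
    by_cases h₁ : p.1 ∈ M
    · have h₂ : p.2 ∉ M := fun h₂ => hd (hp ▸ M.add_mem h₁ h₂)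
      rw [hg _ h₂, mul_zero]
    · rw [hf _ h₁, zero_mul]
  add_mem' {f g} hf hg d hd := by rw [map_add, hf d hd, hg d hd, add_zero]
  algebraMap_mem' r d hd := by
    classical
    rw [algebraMap_apply, Algebra.algebraMap_self, RingHom.id_apply, coeff_C,
      if_neg (fun h : d = 0 => hd (h ▸ M.zero_mem))]

variable {M : AddSubmonoid (σ →₀ ℕ)}

theorem monomial_mem_supportedOn {e : σ →₀ ℕ} (he : e ∈ M) (a : R) :
    monomial e a ∈ supportedOn M := fun d hd => by
  classical
  rw [coeff_monomial, if_neg (fun h : d = e => hd (h ▸ he))]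

theorem X_mem_supportedOn {v : σ} (hv : Finsupp.single v 1 ∈ M) :
    (X v : MvPowerSeries σ R) ∈ supportedOn M :=
  monomial_mem_supportedOn hv 1

end SupportedOn

section Derivative

variable {σ R : Type*} [CommSemiring R]

open Finsupp

theorem coeff_X_mul_pderiv (k : σ) (f : MvPowerSeries σ R) (d : σ →₀ ℕ) :
    coeff d (X k * MvPowerSeries.pderiv R k f) = d k * coeff d f := by
  classical
  rw [X, coeff_monomial_mul, one_mul]
  split_ifs with hk
  · rw [MvPowerSeries.coeff_pderiv, tsub_add_cancel_of_le hk, mul_comm]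
    congr
    have := single_le_iff.mp hk
    simp only [tsub_apply, single_eq_same]
    rw [← Nat.cast_add_one, Nat.sub_add_cancel this]
  · rw [single_le_iff, not_le, Nat.lt_one_iff] at hk
    simp [hk]

theorem coeff_C_add_X_mul (a : R) (v : σ) (G : MvPowerSeries σ R) (d : σ →₀ ℕ) :
    coeff d ((C a + X v) * G) =
      a * coeff d G + if d v = 0 then 0 else coeff (d - single v 1) G := by
  classical
  rw [add_mul, map_add, coeff_C_mul, X, coeff_monomial_mul, one_mul]
  by_cases h : d v = 0 <;> simp [h, single_le_iff, Nat.one_le_iff_ne_zero]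

end Derivative

section DivBinomial

variable {σ R : Type*} [CommRing R]

open Finsupp

/-- The quotient of `f` by `X^e - X v`: the formula comes from
`(Y ^ m - Z ^ m) / (Y - Z) = ∑_{j < m} Y ^ j * Z ^ (m - 1 - j)` with `Y = X^e`, `Z = X v`. -/
noncomputable def divBinomial (v : σ) (e : σ →₀ ℕ) (f : MvPowerSeries σ R) :
    MvPowerSeries σ R :=
  fun d => ∑ x ∈ Finset.range (d v + 1), coeff (d - single v x + (x + 1) • e) f

variable (v : σ) (e : σ →₀ ℕ) (f : MvPowerSeries σ R)

theorem coeff_divBinomial (d : σ →₀ ℕ) :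
    coeff d (divBinomial v e f) =
      ∑ x ∈ Finset.range (d v + 1), coeff (d - single v x + (x + 1) • e) f := rfl

theorem coeff_divBinomial_mul_monomial {d : σ →₀ ℕ} (he : e v = 0) (hd : e ≤ d) :
    coeff d (divBinomial v e f * monomial e 1) =
      ∑ x ∈ Finset.range (d v + 1), coeff (d - single v x + x • e) f := by
  classical
  rw [coeff_mul_monomial, if_pos hd, mul_one, coeff_divBinomial]
  have hv : (d - e) v = d v := by rw [tsub_apply, he, tsub_zero]
  refine hv ▸ Finset.sum_congr rfl fun x _ => congrArg (coeff · f) ?_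
  ext w
  have := hd w
  by_cases hw : v = w
  · subst hw; simp [he]
  · simp [hw, add_mul]; omega

theorem coeff_divBinomial_mul_X (d : σ →₀ ℕ) :
    coeff d (divBinomial v e f * X v) =
      ∑ x ∈ Finset.range (d v), coeff (d - single v (x + 1) + (x + 1) • e) f := by
  classical
  rw [X, coeff_mul_monomial, mul_one]
  split_ifs with hv
  · have hdv : (d - single v 1 : σ →₀ ℕ) v + 1 = d v := by
      have := single_le_iff.mp hv; simp; omega
    rw [coeff_divBinomial, hdv]
    refine Finset.sum_congr rfl fun x _ => ?_
    rw [tsub_tsub, ← single_add, add_comm 1 x]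
  · rw [single_le_iff, not_le, Nat.lt_one_iff] at hv
    rw [hv, Finset.sum_range_zero]

theorem coeff_sub_divBinomial_mul {d : σ →₀ ℕ} (he : e v = 0) (hd : e ≤ d) :
    coeff d (f - divBinomial v e f * (monomial e 1 - X v)) = 0 := by
  rw [mul_sub, map_sub, map_sub, coeff_divBinomial_mul_monomial v e f he hd,
    coeff_divBinomial_mul_X, Finset.sum_range_succ']
  simp

variable {v e f} {A : Type*} [AddCommMonoid A] {φ : (σ →₀ ℕ) →+ A}

theorem divBinomial_mem_supportedOn_mker (hφe : φ e = 0) (hφv : φ (single v 1) = 0)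
    (hf : f ∈ supportedOn (AddMonoidHom.mker φ)) :
    divBinomial v e f ∈ supportedOn (AddMonoidHom.mker φ) := by
  intro d hd
  rw [coeff_divBinomial]
  refine Finset.sum_eq_zero fun x hx => hf _ fun hφ => hd ?_
  have hx : single v x ≤ d := single_le_iff.mpr (Nat.lt_succ_iff.mp (Finset.mem_range.mp hx))
  have hφx : φ (single v x) = 0 := by rw [← smul_single_one, map_nsmul, hφv, smul_zero]
  rw [AddMonoidHom.mem_mker, map_add, map_nsmul, hφe, smul_zero, add_zero] at hφ
  rw [AddMonoidHom.mem_mker, ← tsub_add_cancel_of_le hx, map_add, hφ, hφx, add_zero]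

theorem sub_divBinomial_mul_mem_supportedOn_mker (hφe : φ e = 0) (hφv : φ (single v 1) = 0)
    (hf : f ∈ supportedOn (AddMonoidHom.mker φ)) :
    f - divBinomial v e f * (monomial e 1 - X v) ∈ supportedOn (AddMonoidHom.mker φ) :=
  sub_mem hf <| mul_mem (divBinomial_mem_supportedOn_mker hφe hφv hf) <|
    sub_mem (monomial_mem_supportedOn hφe 1) (X_mem_supportedOn hφv)

end DivBinomial

end MvPowerSeries

theorem Finsupp.degree_sub_single_lt {σ : Type*} {d : σ →₀ ℕ} {v : σ} (hv : d v ≠ 0) :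
    (d - single v 1).degree < d.degree := by
  have hle : single v 1 ≤ d := single_le_iff.mpr (Nat.one_le_iff_ne_zero.mpr hv)
  conv_rhs => rw [← tsub_add_cancel_of_le hle]
  rw [map_add, degree_single]
  exact Nat.lt_succ_self _

theorem pderiv_eq_mvPowerSeries_pderiv {σ : Type} [DecidableEq σ] (k : σ)
    (f : MvPowerSeries σ ℂ) : pderiv k f = MvPowerSeries.pderiv ℂ k f := by
  ext d
  rw [MvPowerSeries.coeff_pderiv, mul_comm]
  rfl

section Normalization

open Finsupp

variable {n : ℕ}

def qpImbalance (n : ℕ) : (Var n →₀ ℕ) →+ (Fin n → ℤ) where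
  toFun d i := (d (qv i) : ℤ) - d (pv i)
  map_zero' := by ext; simp
  map_add' d d' := by ext; simp; ring

theorem qpImbalance_apply (d : Var n →₀ ℕ) (i : Fin n) :
    qpImbalance n d i = (d (qv i) : ℤ) - d (pv i) := rfl

theorem mem_mker_qpImbalance {d : Var n →₀ ℕ} :
    d ∈ AddMonoidHom.mker (qpImbalance n) ↔ ∀ i, d (qv i) = d (pv i) := by
  simp [funext_iff, qpImbalance_apply, sub_eq_zero]

theorem qpImbalance_sub_single_tv (d : Var n →₀ ℕ) (i : Fin n) :
    qpImbalance n (d - single (tv i) 1) = qpImbalance n d := by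
  ext j; simp [qpImbalance_apply, tv, qv, pv]

noncomputable abbrev diagonalSeries (n : ℕ) : Subalgebra ℂ (MvPowerSeries (Var n) ℂ) :=
  supportedOn (AddMonoidHom.mker (qpImbalance n))

noncomputable abbrev qFreeSeries (i : Fin n) : Subalgebra ℂ (MvPowerSeries (Var n) ℂ) :=
  supportedOn (AddMonoidHom.mker (applyAddHom (qv i)))

def tlMonomials (n : ℕ) : AddSubmonoid (Var n →₀ ℕ) where
  carrier := {d | ∀ i, d (qv i) = 0 ∧ d (pv i) = 0}
  add_mem' ha hb i := by simp [(ha i).1, (ha i).2, (hb i).1, (hb i).2]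
  zero_mem' := by simp

theorem noQP_iff_mem_supportedOn {f : MvPowerSeries (Var n) ℂ} :
    noQP f ↔ f ∈ supportedOn (tlMonomials n) := by
  refine forall_congr' fun d => imp_congr_left ?_
  simp [tlMonomials, imp_iff_not_or]

theorem pderiv_pv_H0 (α : Fin n → ℝ) (i : Fin n) :
    MvPowerSeries.pderiv ℂ (pv i) (H0 α) = (C (α i : ℂ) + X (tv i)) * X (qv i) := by
  classical
  simp [H0, MvPowerSeries.pderiv_X, Pi.single_apply, tv, pv, qv]

theorem pderiv_qv_H0 (α : Fin n → ℝ) (i : Fin n) :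
    MvPowerSeries.pderiv ℂ (qv i) (H0 α) = (C (α i : ℂ) + X (tv i)) * X (pv i) := by
  classical
  simp [H0, MvPowerSeries.pderiv_X, Pi.single_apply, tv, pv, qv]

theorem poisson_H0 (F : MvPowerSeries (Var n) ℂ) (α : Fin n → ℝ) :
    poisson F (H0 α) = ∑ i, (C (α i : ℂ) + X (tv i)) *
      (X (qv i) * MvPowerSeries.pderiv ℂ (qv i) F -
        X (pv i) * MvPowerSeries.pderiv ℂ (pv i) F) := by
  refine Finset.sum_congr rfl fun i _ => ?_
  simp only [pderiv_eq_mvPowerSeries_pderiv, pderiv_pv_H0, pderiv_qv_H0]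
  ring

noncomputable def smallDivisor (α : Fin n → ℝ) (d : Var n →₀ ℕ) : ℂ :=
  ∑ i, (qpImbalance n d i : ℂ) * α i

theorem coeff_poisson_H0 (F : MvPowerSeries (Var n) ℂ) (α : Fin n → ℝ) (d : Var n →₀ ℕ) :
    coeff d (poisson F (H0 α)) = smallDivisor α d * coeff d F +
      ∑ i, (qpImbalance n d i : ℂ) *
        if d (tv i) = 0 then 0 else coeff (d - single (tv i) 1) F := by
  have hEuler : ∀ i e, coeff e (X (qv i) * MvPowerSeries.pderiv ℂ (qv i) F -
      X (pv i) * MvPowerSeries.pderiv ℂ (pv i) F) = qpImbalance n e i * coeff e F :=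
    fun i e => by
      rw [map_sub, coeff_X_mul_pderiv, coeff_X_mul_pderiv, qpImbalance_apply]
      push_cast; ring
  rw [poisson_H0, map_sum, smallDivisor, Finset.sum_mul, ← Finset.sum_add_distrib]
  refine Finset.sum_congr rfl fun i _ => ?_
  rw [coeff_C_add_X_mul, hEuler, hEuler, qpImbalance_sub_single_tv]
  split_ifs <;> ring

theorem smallDivisor_ne_zero {α : Fin n → ℝ} (hα : LinearIndependent ℚ α) {d : Var n →₀ ℕ}
    (hd : d ∉ AddMonoidHom.mker (qpImbalance n)) : smallDivisor α d ≠ 0 := by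
  intro h
  refine hd (funext fun i => ?_)
  have hreal : ∑ i, (qpImbalance n d i : ℚ) • α i = 0 := by
    have hcomplex : ((∑ i, (qpImbalance n d i : ℝ) * α i : ℝ) : ℂ) = 0 := by
      push_cast; exact h
    simpa only [Rat.smul_def, Rat.cast_intCast] using Complex.ofReal_eq_zero.mp hcomplex
  exact_mod_cast Fintype.linearIndependent_iff.mp hα _ hreal i

noncomputable def homologicalCoeff (α : Fin n → ℝ) (R : MvPowerSeries (Var n) ℂ)
    (d : Var n →₀ ℕ) : ℂ :=
  if d ∈ AddMonoidHom.mker (qpImbalance n) then 0 else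
    (smallDivisor α d)⁻¹ * (coeff d R - ∑ i, (qpImbalance n d i : ℂ) *
      if h : d (tv i) = 0 then 0 else homologicalCoeff α R (d - single (tv i) 1))
termination_by d.degree
decreasing_by exact degree_sub_single_lt h

theorem exists_sub_poisson_H0_mem_diagonalSeries {α : Fin n → ℝ} (hα : LinearIndependent ℚ α)
    (R : MvPowerSeries (Var n) ℂ) :
    ∃ F, R - poisson F (H0 α) ∈ diagonalSeries n := by
  let F : MvPowerSeries (Var n) ℂ := homologicalCoeff α R
  have hF : ∀ e, coeff e F = homologicalCoeff α R e := fun _ => rfl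
  refine ⟨F, fun d hd => ?_⟩
  rw [map_sub, coeff_poisson_H0, hF d, homologicalCoeff, if_neg hd, ← mul_assoc,
    mul_inv_cancel₀ (smallDivisor_ne_zero hα hd)]
  simp only [dite_eq_ite, hF]
  ring

noncomputable def pqExponent (i : Fin n) : Var n →₀ ℕ := single (pv i) 1 + single (qv i) 1

theorem pqExponent_le_iff {i : Fin n} {d : Var n →₀ ℕ} :
    pqExponent i ≤ d ↔ d (pv i) ≠ 0 ∧ d (qv i) ≠ 0 := by
  have hpq : pv i ≠ qv i := by simp [pv, qv]
  simp only [Finsupp.le_def, pqExponent, coe_add, Pi.add_apply, single_apply]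
  refine ⟨fun h => ⟨?_, ?_⟩, fun ⟨hp, hq⟩ w => ?_⟩
  · have := h (pv i); simp [hpq.symm] at this; omega
  · have := h (qv i); simp [hpq] at this; omega
  · split_ifs <;> subst_vars <;> simp_all <;> omega

noncomputable def idealGen (i : Fin n) : MvPowerSeries (Var n) ℂ :=
  X (pv i) * X (qv i) - X (lv i)

theorem idealGen_eq (i : Fin n) : idealGen i = monomial (pqExponent i) 1 - X (lv i) := by
  rw [idealGen, X, X, monomial_mul_monomial, mul_one, pqExponent]

theorem idealGen_mem_idealI (i : Fin n) : idealGen i ∈ idealI n :=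
  Ideal.subset_span ⟨i, rfl⟩

theorem exists_eq_mul_idealGen_add {f : MvPowerSeries (Var n) ℂ} (hf : f ∈ diagonalSeries n)
    (i : Fin n) :
    ∃ g ∈ diagonalSeries n, ∃ r ∈ diagonalSeries n, r ∈ qFreeSeries i ∧
      (∀ j ≠ i, f ∈ qFreeSeries j → r ∈ qFreeSeries j) ∧ f = g * idealGen i + r := by
  have hφe : qpImbalance n (pqExponent i) = 0 := by
    ext j; simp [qpImbalance_apply, pqExponent, single_apply, pv, qv]
  have hφv : qpImbalance n (single (lv i) 1) = 0 := by
    ext j; simp [qpImbalance_apply, lv, pv, qv]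
  rw [idealGen_eq]
  have hr := sub_divBinomial_mul_mem_supportedOn_mker hφe hφv hf
  refine ⟨_, divBinomial_mem_supportedOn_mker hφe hφv hf, _, hr, fun d hd => ?_, ?_,
    (add_sub_cancel _ _).symm⟩
  · by_cases hdiag : d ∈ AddMonoidHom.mker (qpImbalance n)
    · have hq : d (qv i) ≠ 0 := by simpa using hd
      have hp : d (pv i) ≠ 0 := mem_mker_qpImbalance.mp hdiag i ▸ hq
      exact coeff_sub_divBinomial_mul _ _ _ (by simp [pqExponent, lv, pv, qv])
        (pqExponent_le_iff.mpr ⟨hp, hq⟩)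
    · exact hr d hdiag
  · intro j hj hfj
    exact sub_divBinomial_mul_mem_supportedOn_mker (by simp [pqExponent, hj.symm, pv, qv])
      (by simp [lv, qv]) hfj

theorem exists_eq_sum_mul_idealGen_add_qFreeSeries (s : Finset (Fin n))
    {f : MvPowerSeries (Var n) ℂ} (hf : f ∈ diagonalSeries n) :
    ∃ g : Fin n → MvPowerSeries (Var n) ℂ, (∀ i, g i ∈ diagonalSeries n) ∧
      ∃ r ∈ diagonalSeries n, (∀ i ∈ s, r ∈ qFreeSeries i) ∧
        f = ∑ i ∈ s, g i * idealGen i + r := by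
  classical
  induction s using Finset.induction_on with
  | empty => exact ⟨0, fun _ => zero_mem _, f, hf, by simp, by simp⟩
  | insert i s hi ih =>
    obtain ⟨g, hg, r, hr, hrs, rfl⟩ := ih
    obtain ⟨g', hg', r', hr', hr'i, hr's, rfl⟩ := exists_eq_mul_idealGen_add hr i
    refine ⟨Function.update g i g', fun j => ?_, r', hr', ?_, ?_⟩
    · rcases eq_or_ne j i with rfl | hj
      · simpa using hg'
      · simpa [hj] using hg j
    · simp only [Finset.mem_insert, forall_eq_or_imp]
      exact ⟨hr'i, fun j hj => hr's j (ne_of_mem_of_not_mem hj hi) (hrs j hj)⟩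
    · have hs : ∑ j ∈ s, Function.update g i g' j * idealGen j =
          ∑ j ∈ s, g j * idealGen j :=
        Finset.sum_congr rfl fun j hj => by
          rw [Function.update_of_ne (ne_of_mem_of_not_mem hj hi)]
      rw [Finset.sum_insert hi, Function.update_self, hs]
      ring

theorem exists_eq_sum_mul_idealGen_add {f : MvPowerSeries (Var n) ℂ}
    (hf : f ∈ diagonalSeries n) :
    ∃ g : Fin n → MvPowerSeries (Var n) ℂ, (∀ i, g i ∈ diagonalSeries n) ∧
      ∃ c, noQP c ∧ f = ∑ i, g i * idealGen i + c := by
  obtain ⟨g, hg, r, hr, hrq, hf⟩ := exists_eq_sum_mul_idealGen_add_qFreeSeries Finset.univ hf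
  refine ⟨g, hg, r, fun d ⟨i, hi⟩ => ?_, hf⟩
  by_cases hdiag : d ∈ AddMonoidHom.mker (qpImbalance n)
  · have hq : d (qv i) ≠ 0 := by
      have := mem_mker_qpImbalance.mp hdiag i; omega
    exact hrq i (Finset.mem_univ i) d (by simpa using hq)
  · exact hr d hdiag

theorem exists_sum_mul_pq_eq_add_of_mem_diagonalSeries {f : MvPowerSeries (Var n) ℂ}
    (hf : f ∈ diagonalSeries n) :
    ∃ a : Fin n → MvPowerSeries (Var n) ℂ, (∀ i, noQP (a i)) ∧
      ∃ S ∈ idealI n ^ 2, ∃ c, noQP c ∧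
        ∑ i, a i * (X (pv i) * X (qv i)) = f + S + c := by
  obtain ⟨g, hg, c₀, hc₀, rfl⟩ := exists_eq_sum_mul_idealGen_add hf
  choose _ _ a ha hga using fun i => exists_eq_sum_mul_idealGen_add (hg i)
  have hgI : ∀ i, g i - a i ∈ idealI n := fun i => by
    rw [hga i, add_sub_cancel_right]
    exact Ideal.sum_mem _ fun j _ => Ideal.mul_mem_left _ _ (idealGen_mem_idealI j)
  refine ⟨a, ha, -∑ i, (g i - a i) * idealGen i, ?_, ∑ i, a i * X (lv i) - c₀, ?_, ?_⟩
  · refine neg_mem (Ideal.sum_mem _ fun i _ => ?_)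
    rw [pow_two]
    exact Ideal.mul_mem_mul (hgI i) (idealGen_mem_idealI i)
  · simp only [noQP_iff_mem_supportedOn] at hc₀ ha ⊢
    refine sub_mem (sum_mem fun i _ => mul_mem (ha i) (X_mem_supportedOn ?_)) hc₀
    simp [tlMonomials, lv, qv, pv]
  · have hterm : ∀ i, a i * (X (pv i) * X (qv i)) =
        g i * idealGen i - (g i - a i) * idealGen i + a i * X (lv i) := fun i => by
      rw [idealGen]; ring
    simp only [hterm, Finset.sum_add_distrib, Finset.sum_sub_distrib]
    ring

end Normalization

/-- (Solvability of the homological equation.) If `α₁,…,αₙ` are real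
numbers linearly independent over `ℚ`, `H₀ = Σ (αᵢ+tᵢ)pᵢqᵢ` and
`I = (p₁q₁−λ₁,…,pₙqₙ−λₙ)`, then for every formal power series `R` there exist a series
`F`, elements `a₁,…,aₙ` and `c` of the subring `ℂ[[t,λ]]`, and `S ∈ I²`, such that
`{F, H₀} + Σᵢ aᵢ pᵢqᵢ = R + S + c`. -/
theorem stmt2 (n : ℕ) (α : Fin n → ℝ) (hα : LinearIndependent ℚ α)
    (R : MvPowerSeries (Var n) ℂ) :
    ∃ F : MvPowerSeries (Var n) ℂ, ∃ a : Fin n → MvPowerSeries (Var n) ℂ,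
      (∀ i : Fin n, noQP (a i)) ∧
      ∃ S ∈ (idealI n) ^ 2, ∃ c : MvPowerSeries (Var n) ℂ, noQP c ∧
        poisson F (H0 α) + (∑ i : Fin n, a i * (X (pv i) * X (qv i))) = R + S + c := by
  obtain ⟨F, hF⟩ := exists_sub_poisson_H0_mem_diagonalSeries hα R
  obtain ⟨a, ha, S, hS, c, hc, h⟩ := exists_sum_mul_pq_eq_add_of_mem_diagonalSeries hF
  exact ⟨F, a, ha, S, hS, c, hc, by rw [h]; ring⟩
end

section
/- Let n ≥ 1, let U ⊂ ℂⁿ be an open set, let f : U → ℂ be holomorphic, let w ∈ U and σ > 0 be such that the closed polydisc Δ = {z ∈ ℂⁿ : |z_k − w_k| ≤ σ for k = 1,…,n} is contained in U. Then |f(w)|² ≤ (πσ²)^{−n} · ∫_Δ |f(z)|² dV(z), where dV is the Lebesgue measure on ℂⁿ ≅ ℝ^{2n}. -/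
/-!
Holomorphic functions satisfy the area mean value property on polydiscs: on a disc this follows
from the circle mean value property by integrating in polar coordinates, and on a polydisc by
Fubini, one variable at a time. Applied to the holomorphic function `f ^ 2`, it gives
`(πσ²)ⁿ f(w)² = ∫_Δ f²`, and taking norms yields the inequality.
-/

open MeasureTheory Metric Real Set

theorem Fin.cons_mem_univ_pi {α : Type*} {n : ℕ} {s : Fin (n + 1) → Set α} {x : α}
    {y : Fin n → α} :
    (Fin.cons x y : Fin (n + 1) → α) ∈ univ.pi s ↔
      x ∈ s 0 ∧ y ∈ univ.pi fun i => s i.succ := by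
  simp [Fin.forall_fin_succ]

theorem setIntegral_univ_pi_fin_succ {α E : Type*} [MeasureSpace α]
    [SigmaFinite (volume : Measure α)] [NormedAddCommGroup E] [NormedSpace ℝ E] {n : ℕ}
    {F : (Fin (n + 1) → α) → E} {s : Fin (n + 1) → Set α}
    (hF : IntegrableOn F (univ.pi s)) :
    ∫ z in univ.pi s, F z =
      ∫ x in s 0, ∫ y in univ.pi (fun i => s i.succ), F (Fin.cons x y) := by
  set e := (MeasurableEquiv.piFinSuccAbove (fun _ : Fin (n + 1) => α) 0).symm
  have he : MeasurePreserving e := (volume_preserving_piFinSuccAbove _ 0).symm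
  have he_apply (p : α × (Fin n → α)) : e p = Fin.cons p.1 p.2 := by
    simp [e, MeasurableEquiv.piFinSuccAbove_symm_apply, Fin.insertNthEquiv, Fin.insertNth_zero']
  have hpre : e ⁻¹' univ.pi s = s 0 ×ˢ univ.pi fun i => s i.succ := by
    ext p
    rw [mem_preimage, he_apply, Fin.cons_mem_univ_pi, mem_prod]
  rw [← he.setIntegral_preimage_emb e.measurableEmbedding, hpre, Measure.volume_eq_prod,
    setIntegral_prod]
  · simp only [he_apply]
  · rw [← Measure.volume_eq_prod, ← hpre]
    exact (he.integrableOn_comp_preimage e.measurableEmbedding).2 hF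

section

variable {E : Type*} [NormedAddCommGroup E] [NormedSpace ℝ E]

theorem add_polarCoord_symm_eq_circleMap (c : ℂ) (p : ℝ × ℝ) :
    c + Complex.polarCoord.symm p = circleMap c p.1 p.2 := by
  rw [Complex.polarCoord_symm_apply, circleMap, Complex.exp_mul_I]
  push_cast
  ring

theorem integral_Ioo_circleMap_eq_smul_circleAverage (g : ℂ → E) (c : ℂ) (r : ℝ) :
    ∫ θ in Ioo (-π) π, g (circleMap c r θ) = (2 * π) • circleAverage g c r := by
  have hperiodic : Function.Periodic (fun θ => g (circleMap c r θ)) (2 * π) :=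
    fun θ => by simp [periodic_circleMap c r θ]
  have := hperiodic.intervalIntegral_add_eq (-π) 0
  rw [circleAverage_def, smul_inv_smul₀ (by positivity), ← integral_Ioc_eq_integral_Ioo,
    ← intervalIntegral.integral_of_le (by linarith [pi_pos])]
  rwa [zero_add, show -π + 2 * π = π by ring] at this

theorem integral_closedBall_eq_integral_circleAverage {g : ℂ → E} {c : ℂ} {R : ℝ}
    (hR : 0 ≤ R) (hg : ContinuousOn g (closedBall c R)) :
    ∫ z in closedBall c R, g z = ∫ r in 0..R, (2 * π * r) • circleAverage g c r := by
  set F : ℝ × ℝ → E := fun p => p.1 • g (circleMap c p.1 p.2)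
  have hmem {p : ℝ × ℝ} (hp : 0 < p.1) :
      c + Complex.polarCoord.symm p ∈ closedBall c R ↔ p.1 ≤ R := by
    rw [mem_closedBall, dist_eq_norm, add_sub_cancel_left, Complex.norm_polarCoord_symm,
      abs_of_pos hp]
  have hF : IntegrableOn F (Ioc 0 R ×ˢ Ioo (-π) π) := by
    refine ContinuousOn.integrableOn_compact (isCompact_Icc.prod isCompact_Icc) ?_ |>.mono_set
      (prod_mono Ioc_subset_Icc_self Ioo_subset_Icc_self)
    refine continuousOn_fst.smul (hg.comp (by fun_prop) fun p hp => ?_)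
    rw [mem_closedBall, dist_eq_norm, circleMap_sub_center, norm_circleMap_zero,
      abs_of_nonneg hp.1.1]
    exact hp.1.2
  calc ∫ z in closedBall c R, g z
      = ∫ z, (closedBall c R).indicator g (c + z) := by
        rw [integral_add_left_eq_self, integral_indicator measurableSet_closedBall]
    _ = ∫ p in Complex.polarCoord.target, (Ioc 0 R ×ˢ univ).indicator F p := by
        rw [← Complex.integral_comp_polarCoord_symm]
        refine setIntegral_congr_fun Complex.polarCoord.open_target.measurableSet fun p hp => ?_
        by_cases hpR : p.1 ≤ R
        · have hpF : p ∈ Ioc 0 R ×ˢ univ := ⟨⟨hp.1, hpR⟩, mem_univ _⟩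
          rw [indicator_of_mem ((hmem hp.1).2 hpR), indicator_of_mem hpF,
            add_polarCoord_symm_eq_circleMap]
        · rw [indicator_of_notMem (mt (hmem hp.1).1 hpR),
            indicator_of_notMem fun h => hpR h.1.2, smul_zero]
    _ = ∫ p in Ioc 0 R ×ˢ Ioo (-π) π, F p := by
        rw [setIntegral_indicator (measurableSet_Ioc.prod MeasurableSet.univ),
          Complex.polarCoord_target, prod_inter_prod, inter_univ,
          inter_eq_right.2 Ioc_subset_Ioi_self]
    _ = ∫ r in Ioc 0 R, ∫ θ in Ioo (-π) π, F (r, θ) := by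
        rw [Measure.volume_eq_prod, setIntegral_prod]
        rwa [← Measure.volume_eq_prod]
    _ = ∫ r in 0..R, (2 * π * r) • circleAverage g c r := by
        rw [intervalIntegral.integral_of_le hR]
        refine setIntegral_congr_fun measurableSet_Ioc fun r _ => ?_
        rw [integral_smul, integral_Ioo_circleMap_eq_smul_circleAverage, smul_smul, mul_comm r]

end

section

variable {E : Type*} [NormedAddCommGroup E] [NormedSpace ℂ E] [CompleteSpace E]

theorem DifferentiableOn.integral_closedBall_eq_smul {g : ℂ → E} {c : ℂ} {R : ℝ}
    (hR : 0 ≤ R) (hg : DifferentiableOn ℂ g (closedBall c R)) :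
    ∫ z in closedBall c R, g z = (π * R ^ 2) • g c := by
  have hmean : EqOn (fun r => (2 * π * r) • circleAverage g c r) (fun r => (2 * π * r) • g c)
      (uIcc 0 R) := by
    intro r hr
    rw [uIcc_of_le hR] at hr
    refine congrArg _ (DiffContOnCl.circleAverage (hg.mono ?_).diffContOnCl)
    rw [abs_of_nonneg hr.1]
    exact closure_ball_subset_closedBall.trans (closedBall_subset_closedBall hr.2)
  rw [integral_closedBall_eq_integral_circleAverage hR hg.continuousOn,
    intervalIntegral.integral_congr hmean, intervalIntegral.integral_smul_const,
    intervalIntegral.integral_const_mul, integral_id]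
  congr 1
  ring

theorem DifferentiableOn.integral_closedBall_pi_eq_smul {n : ℕ} {f : (Fin n → ℂ) → E}
    {w : Fin n → ℂ} {R : ℝ} (hR : 0 ≤ R) (hf : DifferentiableOn ℂ f (closedBall w R)) :
    ∫ z in closedBall w R, f z = (π * R ^ 2) ^ n • f w := by
  induction n with
  | zero =>
    have huniv : closedBall w R = univ :=
      eq_univ_of_forall fun z => Subsingleton.elim w z ▸ mem_closedBall_self hR
    rw [huniv, setIntegral_univ, pow_zero, one_smul]
    simp [Subsingleton.elim _ w, measureReal_def, volume_pi]
  | succ n ih =>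
    have hcons {x : ℂ} {y : Fin n → ℂ} :
        (Fin.cons x y : Fin (n + 1) → ℂ) ∈ closedBall w R ↔
          x ∈ closedBall (w 0) R ∧ y ∈ closedBall (Fin.tail w) R := by
      rw [closedBall_pi _ hR, closedBall_pi _ hR, Fin.cons_mem_univ_pi]
      rfl
    have hslice (x : ℂ) (hx : x ∈ closedBall (w 0) R) :
        ∫ y in closedBall (Fin.tail w) R, f (Fin.cons x y) =
          (π * R ^ 2) ^ n • f (Fin.cons x (Fin.tail w)) :=
      ih (hf.comp (by fun_prop) fun y hy => hcons.2 ⟨hx, hy⟩)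
    have hfirst :
        DifferentiableOn ℂ (fun x => f (Fin.cons x (Fin.tail w))) (closedBall (w 0) R) :=
      hf.comp (by fun_prop) fun x hx => hcons.2 ⟨hx, mem_closedBall_self hR⟩
    have hint : IntegrableOn f (closedBall w R) :=
      hf.continuousOn.integrableOn_compact (isCompact_closedBall w R)
    rw [closedBall_pi _ hR] at hint ⊢
    rw [setIntegral_univ_pi_fin_succ hint, ← closedBall_pi _ hR,
      show (fun i : Fin n => w i.succ) = Fin.tail w from rfl,
      setIntegral_congr_fun measurableSet_closedBall hslice, integral_smul,
      hfirst.integral_closedBall_eq_smul hR, Fin.cons_self_tail, smul_smul, ← pow_succ]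

end

theorem stmt4_general (n : ℕ) (U : Set (Fin n → ℂ))
    (f : (Fin n → ℂ) → ℂ) (hf : DifferentiableOn ℂ f U)
    (w : Fin n → ℂ) (σ : ℝ) (hσ : 0 < σ)
    (hΔ : {z : Fin n → ℂ | ∀ k : Fin n, ‖z k - w k‖ ≤ σ} ⊆ U) :
    ‖f w‖ ^ 2 ≤
      ((Real.pi * σ ^ 2) ^ n)⁻¹ *
        ∫ z in {z : Fin n → ℂ | ∀ k : Fin n, ‖z k - w k‖ ≤ σ},
          ‖f z‖ ^ 2 := by
  have hpolydisc :
      {z : Fin n → ℂ | ∀ k : Fin n, ‖z k - w k‖ ≤ σ} = closedBall w σ := by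
    ext z
    simp [closedBall_pi _ hσ.le, dist_eq_norm]
  rw [hpolydisc] at hΔ ⊢
  have hvol : 0 < (π * σ ^ 2) ^ n := by positivity
  have hmean : ∫ z in closedBall w σ, f z ^ 2 = (π * σ ^ 2) ^ n • f w ^ 2 :=
    ((hf.mono hΔ).pow 2).integral_closedBall_pi_eq_smul hσ.le
  calc ‖f w‖ ^ 2 = ((π * σ ^ 2) ^ n)⁻¹ * ‖∫ z in closedBall w σ, f z ^ 2‖ := by
        rw [hmean, norm_smul, Real.norm_of_nonneg hvol.le, norm_pow,
          inv_mul_cancel_left₀ hvol.ne']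
    _ ≤ ((π * σ ^ 2) ^ n)⁻¹ * ∫ z in closedBall w σ, ‖f z‖ ^ 2 := by
        gcongr
        simp_rw [← norm_pow]
        exact norm_integral_le_integral_norm _

/-- (Sub-mean-value inequality for `|f|²` on a polydisc.)  If `f` is
holomorphic on an open set `U ⊆ ℂⁿ`, `w ∈ U`, `σ > 0` and the closed polydisc
`Δ = {z : |z_k − w_k| ≤ σ}` is contained in `U`, then
`|f(w)|² ≤ (πσ²)^{−n} ∫_Δ |f|² dV`, where `dV` is Lebesgue measure on `ℂⁿ ≅ ℝ^{2n}`. -/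
theorem stmt4 (n : ℕ) (hn : 1 ≤ n) (U : Set (Fin n → ℂ)) (hU : IsOpen U)
    (f : (Fin n → ℂ) → ℂ) (hf : DifferentiableOn ℂ f U)
    (w : Fin n → ℂ) (hw : w ∈ U) (σ : ℝ) (hσ : 0 < σ)
    (hΔ : {z : Fin n → ℂ | ∀ k : Fin n, ‖z k - w k‖ ≤ σ} ⊆ U) :
    ‖f w‖ ^ 2 ≤
      ((Real.pi * σ ^ 2) ^ n)⁻¹ *
        ∫ z in {z : Fin n → ℂ | ∀ k : Fin n, ‖z k - w k‖ ≤ σ},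
          ‖f z‖ ^ 2 :=
  stmt4_general n U f hf w σ hσ hΔ
end

section
/- Let n ≥ 1, s > 0, a > 0, and α ∈ ℂⁿ. Let f = Σ_{(i,j)∈S} f_{ij} q^i p^j be a polynomial in the 2n variables q₁,…,qₙ, p₁,…,pₙ with complex coefficients, where S ⊂ ℕⁿ × ℕⁿ is a finite set such that for every (i,j) ∈ S the integer vector i − j ∈ ℤⁿ is nonzero and |⟨α, i − j⟩| ≥ a, with ⟨α, v⟩ = Σ_{k=1}^n α_k v_k. Define g = Σ_{(i,j)∈S} (f_{ij}/⟨α, i−j⟩) q^i p^j. Then the L²-norms over the closed polydisc D_s = {(q,p) ∈ ℂ^{2n} : |q_k| ≤ s, |p_k| ≤ s} (with respect to Lebesgue measure on ℂ^{2n} ≅ ℝ^{4n}) satisfy ‖g‖_{L²(D_s)} ≤ a^{−1} · ‖f‖_{L²(D_s)}. -/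
/-! On a disc centred at `0`, invariance of the measure under rotations forces
`∫ z ^ a * conj z ^ b = 0` for `a ≠ b`. Since the polydisc `D_s` is a product of such discs, the
monomials `q^i p^j` are pairwise orthogonal in `L²(D_s)`, so
`‖∑ e_ij q^i p^j‖² = ∑ |e_ij|² ‖q^i p^j‖²`. Dividing every coefficient by a number of modulus at
least `a` therefore shrinks the squared norm by a factor at least `a²`. -/

open MeasureTheory Set Metric Complex ComplexConjugate

theorem rotation_exp_pow_mul_conj_pow (θ : ℝ) (a b : ℕ) (z : ℂ) :
    rotation (Circle.exp θ) z ^ a * conj (rotation (Circle.exp θ) z) ^ b =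
      exp ((((a : ℝ) - b) * θ : ℝ) * I) * (z ^ a * conj z ^ b) := by
  simp only [rotation_apply, Circle.coe_exp, map_mul, ← exp_conj, conj_I, conj_ofReal, mul_pow,
    ← exp_nat_mul]
  rw [show ((((a : ℝ) - b) * θ : ℝ) : ℂ) * I = a * (θ * I) + b * (θ * -I) by push_cast; ring,
    exp_add]
  ring

-- Rotating by the angle `π / (a - b)` multiplies `z ^ a * conj z ^ b` by `-1`.
theorem integral_pow_mul_conj_pow_eq_zero {μ : Measure ℂ}
    (hμ : ∀ u : Circle, MeasurePreserving (rotation u) μ μ) {a b : ℕ} (hab : a ≠ b) :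
    ∫ z, z ^ a * conj z ^ b ∂μ = 0 := by
  have hab' : (a : ℝ) - b ≠ 0 := sub_ne_zero.mpr (Nat.cast_injective.ne hab)
  set u := Circle.exp (Real.pi / ((a : ℝ) - b))
  have hflip : ∀ z : ℂ, rotation u z ^ a * conj (rotation u z) ^ b = -(z ^ a * conj z ^ b) := by
    intro z
    rw [rotation_exp_pow_mul_conj_pow, mul_div_cancel₀ _ hab', exp_pi_mul_I, neg_one_mul]
  have := (hμ u).integral_comp (rotation u).toHomeomorph.measurableEmbedding
    fun z => z ^ a * conj z ^ b
  simp only [hflip, integral_neg] at this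
  exact self_eq_neg.mp this.symm

theorem measurePreserving_rotation_restrict_closedBall (u : Circle) (r : ℝ) :
    MeasurePreserving (rotation u) (volume.restrict (closedBall (0 : ℂ) r))
      (volume.restrict (closedBall (0 : ℂ) r)) := by
  have hball : rotation u ⁻¹' closedBall (0 : ℂ) r = closedBall 0 r := by
    ext z
    simp only [mem_preimage, mem_closedBall, dist_zero_right, rotation_apply, norm_mul,
      Circle.norm_coe, one_mul]
  simpa only [hball] using
    (rotation u).measurePreserving.restrict_preimage (s := closedBall (0 : ℂ) r)
      measurableSet_closedBall

theorem integral_prod_pow_mul_conj_prod_pow_eq_zero {ι : Type*} [Fintype ι] {μ : Measure ℂ}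
    [SigmaFinite μ] (hμ : ∀ u : Circle, MeasurePreserving (rotation u) μ μ) {i j : ι → ℕ}
    (hij : i ≠ j) :
    ∫ x, (∏ k, x k ^ i k) * conj (∏ k, x k ^ j k) ∂(Measure.pi fun _ => μ) = 0 := by
  obtain ⟨k₀, hk₀⟩ := Function.ne_iff.mp hij
  simp only [map_prod, map_pow, ← Finset.prod_mul_distrib]
  rw [integral_fintype_prod_eq_prod (fun k z => z ^ i k * conj z ^ j k)]
  exact Finset.prod_eq_zero (Finset.mem_univ k₀) (integral_pow_mul_conj_pow_eq_zero hμ hk₀)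

def qpMonomial {ι : Type*} [Fintype ι] (ij : (ι → ℕ) × (ι → ℕ)) (x : (ι → ℂ) × (ι → ℂ)) : ℂ :=
  (∏ k, x.1 k ^ ij.1 k) * ∏ k, x.2 k ^ ij.2 k

theorem continuous_qpMonomial {ι : Type*} [Fintype ι] (ij : (ι → ℕ) × (ι → ℕ)) :
    Continuous (qpMonomial ij) := by
  unfold qpMonomial
  fun_prop

theorem integral_qpMonomial_mul_conj_eq_zero {ι : Type*} [Fintype ι] {μ : Measure ℂ}
    [SigmaFinite μ] (hμ : ∀ u : Circle, MeasurePreserving (rotation u) μ μ)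
    {ij ij' : (ι → ℕ) × (ι → ℕ)} (hne : ij ≠ ij') :
    ∫ x, qpMonomial ij x * conj (qpMonomial ij' x)
      ∂(Measure.pi fun _ => μ).prod (Measure.pi fun _ => μ) = 0 := by
  have hsplit : ∀ x : (ι → ℂ) × (ι → ℂ), qpMonomial ij x * conj (qpMonomial ij' x) =
      ((∏ k, x.1 k ^ ij.1 k) * conj (∏ k, x.1 k ^ ij'.1 k)) *
        ((∏ k, x.2 k ^ ij.2 k) * conj (∏ k, x.2 k ^ ij'.2 k)) := by
    intro x
    simp only [qpMonomial, map_mul]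
    ring
  simp only [hsplit]
  rw [integral_prod_mul (fun q : ι → ℂ => (∏ k, q k ^ ij.1 k) * conj (∏ k, q k ^ ij'.1 k))
    (fun p : ι → ℂ => (∏ k, p k ^ ij.2 k) * conj (∏ k, p k ^ ij'.2 k))]
  rcases not_and_or.mp (mt Prod.ext_iff.mpr hne) with h | h
  · rw [integral_prod_pow_mul_conj_prod_pow_eq_zero hμ h, zero_mul]
  · rw [integral_prod_pow_mul_conj_prod_pow_eq_zero hμ h, mul_zero]

section Orthogonal

variable {X ι : Type*} [MeasurableSpace X] {μ : Measure X} {S : Finset ι} {M : ι → X → ℂ}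

theorem integral_norm_sum_mul_sq_of_orthogonal
    (hint : ∀ i ∈ S, ∀ j ∈ S, Integrable (fun x => M i x * conj (M j x)) μ)
    (horth : ∀ i ∈ S, ∀ j ∈ S, i ≠ j → ∫ x, M i x * conj (M j x) ∂μ = 0) (e : ι → ℂ) :
    ∫ x, ‖∑ i ∈ S, e i * M i x‖ ^ 2 ∂μ = ∑ i ∈ S, ‖e i‖ ^ 2 * ∫ x, ‖M i x‖ ^ 2 ∂μ := by
  have hexpand : ∀ x, ((‖∑ i ∈ S, e i * M i x‖ ^ 2 : ℝ) : ℂ) =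
      ∑ i ∈ S, ∑ j ∈ S, e i * conj (e j) * (M i x * conj (M j x)) := by
    intro x
    rw [ofReal_pow, ← mul_conj', map_sum, Finset.sum_mul_sum]
    refine Finset.sum_congr rfl fun i _ => Finset.sum_congr rfl fun j _ => ?_
    rw [map_mul]
    ring
  apply ofReal_injective
  calc ((∫ x, ‖∑ i ∈ S, e i * M i x‖ ^ 2 ∂μ : ℝ) : ℂ)
      = ∑ i ∈ S, ∑ j ∈ S, e i * conj (e j) * ∫ x, M i x * conj (M j x) ∂μ := by
        rw [← integral_complex_ofReal]
        simp only [hexpand]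
        rw [integral_finsetSum _ fun i hi =>
          integrable_finsetSum _ fun j hj => (hint i hi j hj).const_mul _]
        refine Finset.sum_congr rfl fun i hi => ?_
        rw [integral_finsetSum _ fun j hj => (hint i hi j hj).const_mul _]
        simp only [integral_const_mul]
    _ = ∑ i ∈ S, e i * conj (e i) * ∫ x, M i x * conj (M i x) ∂μ :=
        Finset.sum_congr rfl fun i hi => Finset.sum_eq_single_of_mem i hi fun j hj hji => by
          rw [horth i hi j hj hji.symm, mul_zero]
    _ = ((∑ i ∈ S, ‖e i‖ ^ 2 * ∫ x, ‖M i x‖ ^ 2 ∂μ : ℝ) : ℂ) := by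
        simp only [mul_conj', ← ofReal_pow, integral_complex_ofReal]
        push_cast
        rfl

theorem sqrt_integral_norm_sum_mul_sq_le_of_orthogonal
    (hint : ∀ i ∈ S, ∀ j ∈ S, Integrable (fun x => M i x * conj (M j x)) μ)
    (horth : ∀ i ∈ S, ∀ j ∈ S, i ≠ j → ∫ x, M i x * conj (M j x) ∂μ = 0)
    {C : ℝ} (hC : 0 ≤ C) {e e' : ι → ℂ} (he : ∀ i ∈ S, ‖e i‖ ≤ C * ‖e' i‖) :
    √(∫ x, ‖∑ i ∈ S, e i * M i x‖ ^ 2 ∂μ) ≤ C * √(∫ x, ‖∑ i ∈ S, e' i * M i x‖ ^ 2 ∂μ) := by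
  rw [integral_norm_sum_mul_sq_of_orthogonal hint horth,
    integral_norm_sum_mul_sq_of_orthogonal hint horth, ← Real.sqrt_sq hC,
    ← Real.sqrt_mul (sq_nonneg C), Finset.mul_sum]
  refine Real.sqrt_le_sqrt (Finset.sum_le_sum fun i hi => ?_)
  have hsq : ‖e i‖ ^ 2 ≤ C ^ 2 * ‖e' i‖ ^ 2 := by
    rw [← mul_pow]
    exact pow_le_pow_left₀ (norm_nonneg _) (he i hi) 2
  rw [← mul_assoc]
  exact mul_le_mul_of_nonneg_right hsq (integral_nonneg fun x => sq_nonneg _)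

end Orthogonal

theorem volume_restrict_prod_pi_closedBall (ι : Type*) [Fintype ι] (r : ℝ) :
    (volume : Measure ((ι → ℂ) × (ι → ℂ))).restrict
        ((univ.pi fun _ => closedBall 0 r) ×ˢ (univ.pi fun _ => closedBall 0 r)) =
      (Measure.pi fun _ => volume.restrict (closedBall (0 : ℂ) r)).prod
        (Measure.pi fun _ => volume.restrict (closedBall (0 : ℂ) r)) := by
  rw [Measure.volume_eq_prod, ← Measure.prod_restrict, volume_pi, Measure.restrict_pi_pi]

theorem integrable_qpMonomial_mul_conj {ι : Type*} [Fintype ι] (r : ℝ)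
    (ij ij' : (ι → ℕ) × (ι → ℕ)) :
    Integrable (fun x => qpMonomial ij x * conj (qpMonomial ij' x))
      ((Measure.pi fun _ => volume.restrict (closedBall (0 : ℂ) r)).prod
        (Measure.pi fun _ => volume.restrict (closedBall (0 : ℂ) r))) := by
  rw [← volume_restrict_prod_pi_closedBall]
  have hcompact : IsCompact (univ.pi fun _ : ι => closedBall (0 : ℂ) r) :=
    isCompact_univ_pi fun _ => isCompact_closedBall 0 r
  exact ((continuous_qpMonomial ij).mul (continuous_conj.comp (continuous_qpMonomial ij'))
    ).continuousOn.integrableOn_compact (hcompact.prod hcompact)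

theorem stmt7_general (n : ℕ) (s a : ℝ) (ha : 0 < a)
    (α : Fin n → ℂ) (S : Finset ((Fin n → ℕ) × (Fin n → ℕ)))
    (c : (Fin n → ℕ) × (Fin n → ℕ) → ℂ)
    (hS : ∀ ij ∈ S, (fun k : Fin n => (ij.1 k : ℤ) - (ij.2 k : ℤ)) ≠ 0 ∧
      a ≤ ‖∑ k : Fin n, α k * ((ij.1 k : ℂ) - (ij.2 k : ℂ))‖) :
    Real.sqrt (∫ x in {x : (Fin n → ℂ) × (Fin n → ℂ) |
        (∀ k : Fin n, ‖x.1 k‖ ≤ s) ∧ (∀ k : Fin n, ‖x.2 k‖ ≤ s)},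
        ‖∑ ij ∈ S,
          c ij / (∑ k : Fin n, α k * ((ij.1 k : ℂ) - (ij.2 k : ℂ))) *
            (∏ k : Fin n, x.1 k ^ ij.1 k) * ∏ k : Fin n, x.2 k ^ ij.2 k‖ ^ 2) ≤
      a⁻¹ * Real.sqrt (∫ x in {x : (Fin n → ℂ) × (Fin n → ℂ) |
        (∀ k : Fin n, ‖x.1 k‖ ≤ s) ∧ (∀ k : Fin n, ‖x.2 k‖ ≤ s)},
        ‖∑ ij ∈ S,
          c ij * (∏ k : Fin n, x.1 k ^ ij.1 k) * ∏ k : Fin n, x.2 k ^ ij.2 k‖ ^ 2) := by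
  have hpolydisc : {x : (Fin n → ℂ) × (Fin n → ℂ) |
      (∀ k : Fin n, ‖x.1 k‖ ≤ s) ∧ (∀ k : Fin n, ‖x.2 k‖ ≤ s)} =
      (univ.pi fun _ => closedBall 0 s) ×ˢ (univ.pi fun _ => closedBall 0 s) := by
    ext x
    simp only [mem_ofPred_eq, mem_prod, mem_univ_pi, mem_closedBall, dist_zero_right]
  have hcoeff : ∀ ij ∈ S,
      ‖c ij / ∑ k : Fin n, α k * ((ij.1 k : ℂ) - (ij.2 k : ℂ))‖ ≤ a⁻¹ * ‖c ij‖ := by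
    intro ij hij
    rw [norm_div, ← div_eq_inv_mul]
    exact div_le_div_of_nonneg_left (norm_nonneg _) ha (hS ij hij).2
  simpa only [hpolydisc, volume_restrict_prod_pi_closedBall, qpMonomial, mul_assoc] using
    sqrt_integral_norm_sum_mul_sq_le_of_orthogonal
      (fun ij _ ij' _ => integrable_qpMonomial_mul_conj s ij ij')
      (fun ij _ ij' _ => integral_qpMonomial_mul_conj_eq_zero
        (measurePreserving_rotation_restrict_closedBall · s)) (inv_nonneg.2 ha.le) hcoeff

/-- (L²-bound for the small-divisor (Hadamard) operator.)  Let
`f = Σ_{(i,j)∈S} f_{ij} q^i p^j` be a polynomial in `q₁,…,qₙ,p₁,…,pₙ` whose exponents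
satisfy `i − j ≠ 0` and `|⟨α, i−j⟩| ≥ a > 0`, and let
`g = Σ_{(i,j)∈S} (f_{ij}/⟨α,i−j⟩) q^i p^j`.  Then on the closed polydisc
`D_s = {(q,p) : |q_k| ≤ s, |p_k| ≤ s}` one has `‖g‖_{L²(D_s)} ≤ a⁻¹ ‖f‖_{L²(D_s)}`. -/
theorem stmt7 (n : ℕ) (hn : 1 ≤ n) (s a : ℝ) (hs : 0 < s) (ha : 0 < a)
    (α : Fin n → ℂ) (S : Finset ((Fin n → ℕ) × (Fin n → ℕ)))
    (c : (Fin n → ℕ) × (Fin n → ℕ) → ℂ)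
    (hS : ∀ ij ∈ S, (fun k : Fin n => (ij.1 k : ℤ) - (ij.2 k : ℤ)) ≠ 0 ∧
      a ≤ ‖∑ k : Fin n, α k * ((ij.1 k : ℂ) - (ij.2 k : ℂ))‖) :
    Real.sqrt (∫ x in {x : (Fin n → ℂ) × (Fin n → ℂ) |
        (∀ k : Fin n, ‖x.1 k‖ ≤ s) ∧ (∀ k : Fin n, ‖x.2 k‖ ≤ s)},
        ‖∑ ij ∈ S,
          c ij / (∑ k : Fin n, α k * ((ij.1 k : ℂ) - (ij.2 k : ℂ))) *
            (∏ k : Fin n, x.1 k ^ ij.1 k) * ∏ k : Fin n, x.2 k ^ ij.2 k‖ ^ 2) ≤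
      a⁻¹ * Real.sqrt (∫ x in {x : (Fin n → ℂ) × (Fin n → ℂ) |
        (∀ k : Fin n, ‖x.1 k‖ ≤ s) ∧ (∀ k : Fin n, ‖x.2 k‖ ≤ s)},
        ‖∑ ij ∈ S,
          c ij * (∏ k : Fin n, x.1 k ^ ij.1 k) * ∏ k : Fin n, x.2 k ^ ij.2 k‖ ^ 2) :=
  stmt7_general n s a ha α S c hS
end

section
/- Let n ≥ 1, N ∈ ℕ, 0 extensionless< s < t ≤ 1, and let f be continuous on the closed polydisc D_t = {z ∈ ℂⁿ : |z_k| ≤ t} and holomorphic on its interior, with Taylor expansion f(z) = Σ_i a_i z^i at the origin. Assume a_i = 0 for every multi-index i with |i| < N, where |i| = i₁+…+iₙ. Then sup_{z∈D_s} |f(z)| ≤ (t−s)^{−n} · (s/t)^N · sup_{z∈D_t} |f(z)|. -/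
/-!
Fix `z ∈ D_s` and restrict `f` to the complex line `y ↦ f (y • z)`. On the disc `‖y‖ < t / s`
this is the power series `∑ P_m(z) y^m`, where `P_m` is the degree-`m` homogeneous part of the
Taylor series of `f`; it is bounded by `M = sup_{D_t} ‖f‖`, and `P_m = 0` for `m < N`. Cauchy's
estimate gives `‖P_m(z)‖ (t/s)^m ≤ M`, so at `y = 1` the series is dominated by the geometric tail
`∑_{m ≥ N} M (s/t)^m = M (s/t)^N (1 - s/t)⁻¹`. Finally `(1 - s/t)⁻¹ = t / (t - s) ≤ (t - s)^(-n)`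
because `t ≤ 1` and `t - s ≤ 1`.
-/

open Metric Filter Finset FormalMultilinearSeries
open scoped NNReal Nat

theorem HasSum.sum_antidiagonalTuple {α : Type*} [AddCommMonoid α] [TopologicalSpace α]
    [ContinuousAdd α] [RegularSpace α] {k : ℕ} {g : (Fin k → ℕ) → α} {a : α} (h : HasSum g a) :
    HasSum (fun m => ∑ i ∈ Nat.antidiagonalTuple k m, g i) a := by
  refine ((Nat.sigmaAntidiagonalTupleEquivTuple k).hasSum_iff.mpr h).sigma fun m => ?_
  rw [← sum_coe_sort]
  exact hasSum_fintype _

theorem HasSum.norm_le_of_eq_zero_of_norm_le_geometric {E : Type*} [NormedAddCommGroup E]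
    {f : ℕ → E} {b : E} {N : ℕ} {M q : ℝ} (h : HasSum f b) (hzero : ∀ m < N, f m = 0)
    (hq0 : 0 ≤ q) (hq1 : q < 1) (hf : ∀ m, ‖f m‖ ≤ M * q ^ m) :
    ‖b‖ ≤ M * q ^ N * (1 - q)⁻¹ := by
  have htail : HasSum (fun m => f (m + N)) b := by
    simpa [sum_eq_zero fun m hm => hzero m (mem_range.mp hm)] using
      (hasSum_nat_add_iff' N).mpr h
  refine htail.norm_le_of_bounded ((hasSum_geometric_of_lt_one hq0 hq1).mul_left (M * q ^ N))
    fun m => (hf _).trans_eq ?_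
  ring

theorem hasFPowerSeriesOnBall_ofScalars_of_hasSum {F : ℂ → ℂ} {c : ℕ → ℂ} {R : ℝ≥0} (hR : 0 < R)
    (hF : ∀ y : ℂ, ‖y‖ < R → HasSum (fun m => c m * y ^ m) (F y)) :
    HasFPowerSeriesOnBall F (ofScalars ℂ c) 0 R where
  r_le := by
    refine ENNReal.le_of_forall_nnreal_lt fun r hr => (ofScalars ℂ c).le_radius_of_summable ?_
    simpa [ofScalars_norm] using (hF (r : ℝ) (by simpa using hr)).summable.norm
  r_pos := by exact_mod_cast hR
  hasSum := by
    intro y hy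
    rw [eball_coe, mem_ball_zero_iff] at hy
    simpa [ofScalars_apply_eq, mul_comm] using hF y hy

theorem norm_mul_pow_le_of_hasSum_of_norm_le {F : ℂ → ℂ} {c : ℕ → ℂ} {R M : ℝ} (hR : 0 < R)
    (hF : ∀ y : ℂ, ‖y‖ < R → HasSum (fun m => c m * y ^ m) (F y))
    (hM : ∀ y : ℂ, ‖y‖ < R → ‖F y‖ ≤ M) (m : ℕ) : ‖c m‖ * R ^ m ≤ M := by
  lift R to ℝ≥0 using hR.le
  have hps := hasFPowerSeriesOnBall_ofScalars_of_hasSum (mod_cast hR) hF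
  have hc : c = fun m => iteratedDeriv m F 0 / m ! :=
    ofScalars_series_injective ℂ ℂ
      (hps.hasFPowerSeriesAt.eq_formalMultilinearSeries hps.analyticAt.hasFPowerSeriesAt)
  have hr : ∀ r ∈ Set.Ioo 0 (R : ℝ), ‖c m‖ * r ^ m ≤ M := by
    rintro r ⟨hr0, hrR⟩
    have hdiff : DifferentiableOn ℂ F (ball 0 R) := by
      simpa only [eball_coe] using hps.differentiableOn
    have hcauchy := Complex.norm_iteratedDeriv_le_of_forall_mem_sphere_norm_le m hr0
      (hdiff.diffContOnCl_ball (closedBall_subset_ball hrR))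
      fun y hy => hM y (by rwa [mem_sphere_zero_iff_norm.mp hy])
    rw [hc, norm_div, Complex.norm_natCast, div_mul_eq_mul_div, div_le_iff₀ (by positivity)]
    rw [le_div_iff₀ (by positivity)] at hcauchy
    linarith
  exact le_of_tendsto ((continuous_const.mul (continuous_pow m)).tendsto _ |>.mono_left
    nhdsWithin_le_nhds) (eventually_of_mem (Ioo_mem_nhdsLT (mod_cast hR)) hr)

theorem norm_le_of_hasSum_of_coeff_eq_zero {F : ℂ → ℂ} {c : ℕ → ℂ} {R M : ℝ} {N : ℕ}
    (hF : ∀ y : ℂ, ‖y‖ < R → HasSum (fun m => c m * y ^ m) (F y))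
    (hM : ∀ y : ℂ, ‖y‖ < R → ‖F y‖ ≤ M) (hc : ∀ m < N, c m = 0) {x : ℂ} (hx : ‖x‖ < R) :
    ‖F x‖ ≤ M * (‖x‖ / R) ^ N * (1 - ‖x‖ / R)⁻¹ := by
  have hR : 0 < R := (norm_nonneg x).trans_lt hx
  refine (hF x hx).norm_le_of_eq_zero_of_norm_le_geometric (fun m hm => by simp [hc m hm])
    (by positivity) ((div_lt_one hR).mpr hx) fun m => ?_
  calc ‖c m * x ^ m‖ = ‖c m‖ * R ^ m * (‖x‖ / R) ^ m := by
        rw [norm_mul, norm_pow, div_pow, mul_assoc, mul_div_cancel₀ _ (by positivity)]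
    _ ≤ M * (‖x‖ / R) ^ m := by
        gcongr
        exact norm_mul_pow_le_of_hasSum_of_norm_le hR hF hM m

def homogeneousPart {n : ℕ} {α : Type*} [CommSemiring α] (a : (Fin n → ℕ) → α) (z : Fin n → α)
    (m : ℕ) : α :=
  ∑ i ∈ Nat.antidiagonalTuple n m, a i * ∏ k, z k ^ i k

theorem homogeneousPart_eq_zero {n N m : ℕ} {α : Type*} [CommSemiring α] {a : (Fin n → ℕ) → α}
    (ha : ∀ i : Fin n → ℕ, ∑ k, i k < N → a i = 0) (z : Fin n → α) (hm : m < N) :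
    homogeneousPart a z m = 0 :=
  sum_eq_zero fun i hi => by rw [ha i (by rwa [Nat.mem_antidiagonalTuple.mp hi]), zero_mul]

theorem hasSum_homogeneousPart_mul_pow {n : ℕ} {α : Type*} [CommSemiring α] [TopologicalSpace α]
    [ContinuousAdd α] [RegularSpace α] {a : (Fin n → ℕ) → α} {z : Fin n → α} {y b : α}
    (h : HasSum (fun i => a i * ∏ k, (y • z) k ^ i k) b) :
    HasSum (fun m => homogeneousPart a z m * y ^ m) b := by
  convert h.sum_antidiagonalTuple using 2 with m
  rw [homogeneousPart, sum_mul]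
  refine sum_congr rfl fun i hi => ?_
  simp only [Pi.smul_apply, smul_eq_mul, mul_pow, prod_mul_distrib, prod_pow_eq_pow_sum,
    Nat.mem_antidiagonalTuple.mp hi]
  ring

theorem IsCompact.le_biSup_of_continuousOn {X : Type*} [TopologicalSpace X] {K : Set X}
    {g : X → ℝ} (hK : IsCompact K) (hg : ContinuousOn g K) {x : X} (hx : x ∈ K) :
    g x ≤ ⨆ y ∈ K, g y := by
  refine le_ciSup₂ (f := fun y (_ : y ∈ K) => g y) ((hK.bddAbove_image hg).mono ?_) x hx
  rintro _ ⟨_, ⟨y, rfl⟩, ⟨hy, rfl⟩⟩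
  exact ⟨y, hy, rfl⟩

theorem isCompact_polydisc (n : ℕ) {t : ℝ} (ht : 0 ≤ t) :
    IsCompact {z : Fin n → ℂ | ∀ k, ‖z k‖ ≤ t} := by
  have hball : {z : Fin n → ℂ | ∀ k, ‖z k‖ ≤ t} = closedBall 0 t := by
    ext z
    rw [mem_closedBall_zero_iff, pi_norm_le_iff_of_nonneg ht]
    rfl
  exact hball ▸ isCompact_closedBall 0 t

theorem inv_one_sub_div_le_inv_sub_pow {s t : ℝ} {n : ℕ} (hn : 1 ≤ n) (hs : 0 ≤ s) (hst : s < t)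
    (ht : t ≤ 1) : (1 - s / t)⁻¹ ≤ ((t - s) ^ n)⁻¹ := by
  have hts : 0 < t - s := sub_pos.mpr hst
  rw [one_sub_div (by linarith), inv_div]
  calc t / (t - s) ≤ (t - s)⁻¹ := by
        rw [div_eq_mul_inv]
        exact mul_le_of_le_one_left (by positivity) ht
    _ ≤ ((t - s) ^ n)⁻¹ :=
        inv_anti₀ (by positivity) (pow_le_of_le_one hts.le (by linarith) (by omega))

theorem stmt10_general (n N : ℕ) (hn : 1 ≤ n) (s t : ℝ) (hs : 0 < s) (hst : s < t) (ht : t ≤ 1)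
    (f : (Fin n → ℂ) → ℂ) (a : (Fin n → ℕ) → ℂ)
    (hcont : ContinuousOn f {z : Fin n → ℂ | ∀ k : Fin n, ‖z k‖ ≤ t})
    (hexp : ∀ z : Fin n → ℂ, (∀ k : Fin n, ‖z k‖ < t) →
      HasSum (fun i : Fin n → ℕ => a i * ∏ k : Fin n, z k ^ i k) (f z))
    (hN : ∀ i : Fin n → ℕ, (∑ k : Fin n, i k) < N → a i = 0) :
    ∀ z : Fin n → ℂ, (∀ k : Fin n, ‖z k‖ ≤ s) →
      ‖f z‖ ≤
        ((t - s) ^ n)⁻¹ * (s / t) ^ N *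
          ⨆ w ∈ {w : Fin n → ℂ | ∀ k : Fin n, ‖w k‖ ≤ t},
            ‖f w‖ := by
  intro z hz
  have ht0 : 0 < t := hs.trans hst
  set M := ⨆ w ∈ {w : Fin n → ℂ | ∀ k : Fin n, ‖w k‖ ≤ t}, ‖f w‖
  have hfM : ∀ w : Fin n → ℂ, (∀ k, ‖w k‖ ≤ t) → ‖f w‖ ≤ M := fun w hw =>
    (isCompact_polydisc n ht0.le).le_biSup_of_continuousOn hcont.norm hw
  have hline : ∀ y : ℂ, ‖y‖ < t / s → ∀ k, ‖(y • z) k‖ < t := fun y hy k => by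
    rw [Pi.smul_apply, smul_eq_mul, norm_mul]
    calc ‖y‖ * ‖z k‖ ≤ ‖y‖ * s := by gcongr; exact hz k
      _ < t / s * s := by gcongr
      _ = t := div_mul_cancel₀ t hs.ne'
  have hbound := norm_le_of_hasSum_of_coeff_eq_zero (F := fun y => f (y • z))
    (fun y hy => hasSum_homogeneousPart_mul_pow (hexp _ (hline y hy)))
    (fun y hy => hfM _ fun k => (hline y hy k).le) (fun m hm => homogeneousPart_eq_zero hN z hm)
    (x := 1) (by rwa [norm_one, one_lt_div hs])
  rw [one_smul, norm_one, one_div_div] at hbound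
  have hM0 : 0 ≤ M := (norm_nonneg _).trans (hfM 0 fun _ => by simpa using ht0.le)
  calc ‖f z‖ ≤ M * (s / t) ^ N * (1 - s / t)⁻¹ := hbound
    _ ≤ M * (s / t) ^ N * ((t - s) ^ n)⁻¹ :=
        mul_le_mul_of_nonneg_left (inv_one_sub_div_le_inv_sub_pow hn hs.le hst ht) (by positivity)
    _ = ((t - s) ^ n)⁻¹ * (s / t) ^ N * M := by ring

/-- Let `0 < s < t ≤ 1` and let `f` be continuous on the closed
polydisc `D_t ⊆ ℂⁿ`, holomorphic on its interior, with Taylor expansion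
`f(z) = Σ_i a_i z^i` at the origin (valid on the open polydisc).  If `a_i = 0` whenever
`|i| < N`, then `sup_{D_s} |f| ≤ (t−s)^{−n} (s/t)^N sup_{D_t} |f|`. -/
theorem stmt10 (n N : ℕ) (hn : 1 ≤ n) (s t : ℝ) (hs : 0 < s) (hst : s < t) (ht : t ≤ 1)
    (f : (Fin n → ℂ) → ℂ) (a : (Fin n → ℕ) → ℂ)
    (hcont : ContinuousOn f {z : Fin n → ℂ | ∀ k : Fin n, ‖z k‖ ≤ t})
    (hdiff : DifferentiableOn ℂ f {z : Fin n → ℂ | ∀ k : Fin n, ‖z k‖ < t})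
    (hexp : ∀ z : Fin n → ℂ, (∀ k : Fin n, ‖z k‖ < t) →
      HasSum (fun i : Fin n → ℕ => a i * ∏ k : Fin n, z k ^ i k) (f z))
    (hN : ∀ i : Fin n → ℕ, (∑ k : Fin n, i k) < N → a i = 0) :
    ∀ z : Fin n → ℂ, (∀ k : Fin n, ‖z k‖ ≤ s) →
      ‖f z‖ ≤
        ((t - s) ^ n)⁻¹ * (s / t) ^ N *
          ⨆ w ∈ {w : Fin n → ℂ | ∀ k : Fin n, ‖w k‖ ≤ t},
            ‖f w‖ :=
  stmt10_general n N hn s t hs hst ht f a hcont hexp hN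
end
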